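/- Let φ: ℂ → ℂ be holomorphic near y₀ with φ'(y₀) ≠ 0. Then for the function F(x,y) = φ'(y)/(φ(x) − φ(y)) defined for x ≠ y near y₀, the difference F(x,y) − 1/(x−y) extends holomorphically across the diagonal, and its value on the diagonal is −(1/2)·φ''(y)/φ'(y). -/

import Mathlib

/-!
The divided difference `H x y = (φ x - φ y) / (x - y)`, extended by `φ' y` on the diagonal, is
jointly analytic near `(y₀, y₀)`: if `φ (a + u) = ∑ cₙ uⁿ`, then
`H (a + u) (a + v) = ∑ₙ cₙ₊₁ ∑_{i+j=n} uⁱ vʲ` off the diagonal, and by continuity also on it.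
Since `φ' y / (φ x - φ y) - 1 / (x - y) = -∂_y log H x y`, the required extension is
`G = -∂_y H / H`, analytic where `H ≠ 0`, in particular near `(y₀, y₀)` where `H = φ' y₀`.
Differentiating `(x - y) H x y = φ x - φ y` in `y` gives the off-diagonal formula. On the
diagonal, `H` is symmetric and `H y y = φ' y`, so `2 ∂_y H y y = φ'' y`.
-/

open Filter Topology Finset
open scoped ENNReal

section DividedDifference

variable {𝕜 E : Type*} [NontriviallyNormedField 𝕜] [NormedAddCommGroup E] [NormedSpace 𝕜 E]

/-- The divided difference `f[x, y] = (f x - f y) / (x - y)`, equal to `f' y` on the diagonal. -/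
noncomputable def divDiff (f : 𝕜 → E) (z : 𝕜 × 𝕜) : E := dslope f z.2 z.1

theorem divDiff_diag (f : 𝕜 → E) (y : 𝕜) : divDiff f (y, y) = deriv f y := dslope_same f y

theorem sub_smul_divDiff (f : 𝕜 → E) (z : 𝕜 × 𝕜) : (z.1 - z.2) • divDiff f z = f z.1 - f z.2 :=
  sub_smul_dslope f z.2 z.1

theorem divDiff_swap (f : 𝕜 → E) (z : 𝕜 × 𝕜) : divDiff f z.swap = divDiff f z := by
  obtain ⟨x, y⟩ := z
  rcases eq_or_ne x y with rfl | h
  · rfl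
  · simp only [divDiff, Prod.swap_prod_mk, dslope_of_ne f h, dslope_of_ne f h.symm, slope_comm]

theorem eq_divDiff_of_sub_smul_eq {f : 𝕜 → E} {x y : 𝕜} {w : E} (h : x ≠ y)
    (hw : (x - y) • w = f x - f y) : w = divDiff f (x, y) :=
  smul_right_injective E (sub_ne_zero.2 h) (hw.trans (sub_smul_divDiff f (x, y)).symm)

theorem sub_smul_fderiv_divDiff_snd {f : 𝕜 → E} {x y : 𝕜}
    (h : DifferentiableAt 𝕜 (divDiff f) (x, y)) :
    (x - y) • fderiv 𝕜 (divDiff f) (x, y) (0, 1) = divDiff f (x, y) - deriv f y := by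
  have hD : HasDerivAt (fun w => divDiff f (x, w)) (fderiv 𝕜 (divDiff f) (x, y) (0, 1)) y :=
    h.hasFDerivAt.comp_hasDerivAt (f := fun w => (x, w)) y
      ((hasDerivAt_const y x).prodMk (hasDerivAt_id y))
  have hf : (fun w => f x - (x - w) • divDiff f (x, w)) = f := by
    ext w; rw [sub_smul_divDiff f (x, w), sub_sub_cancel]
  have hderiv : HasDerivAt (fun w => f x - (x - w) • divDiff f (x, w))
      (-((x - y) • fderiv 𝕜 (divDiff f) (x, y) (0, 1) + (-1 : 𝕜) • divDiff f (x, y))) y :=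
    (((hasDerivAt_id' y).const_sub x).smul hD).const_sub (f x)
  rw [hf] at hderiv
  rw [hderiv.deriv, neg_one_smul]
  abel

theorem two_smul_fderiv_divDiff_snd_diag {f : 𝕜 → E} {y : 𝕜}
    (h : DifferentiableAt 𝕜 (divDiff f) (y, y)) :
    (2 : 𝕜) • fderiv 𝕜 (divDiff f) (y, y) (0, 1) = deriv (deriv f) y := by
  set L := fderiv 𝕜 (divDiff f) (y, y)
  have hfst : HasDerivAt (fun t => divDiff f (t, y)) (L (1, 0)) y :=
    h.hasFDerivAt.comp_hasDerivAt (f := fun t => (t, y)) y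
      ((hasDerivAt_id y).prodMk (hasDerivAt_const y y))
  have hsnd : HasDerivAt (fun t => divDiff f (t, y)) (L (0, 1)) y := by
    simp_rw [← divDiff_swap f (_, y)]
    exact h.hasFDerivAt.comp_hasDerivAt (f := fun t => (y, t)) y
      ((hasDerivAt_const y y).prodMk (hasDerivAt_id y))
  have hdiag : HasDerivAt (deriv f) (L (1, 1)) y := by
    simp_rw [funext fun t => (divDiff_diag f t).symm]
    exact h.hasFDerivAt.comp_hasDerivAt (f := fun t => (t, t)) y
      ((hasDerivAt_id y).prodMk (hasDerivAt_id y))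
  rw [hdiag.deriv, show ((1 : 𝕜), (1 : 𝕜)) = (1, 0) + (0, 1) by simp, map_add,
    hfst.unique hsnd, two_smul]

section Monomial

variable (𝕜)

noncomputable def prodMonomial (n i : ℕ) : ContinuousMultilinearMap 𝕜 (fun _ : Fin n => 𝕜 × 𝕜) 𝕜 :=
  (ContinuousMultilinearMap.mkPiAlgebra 𝕜 (Fin n) 𝕜).compContinuousLinearMap
    fun k => if (k : ℕ) < i then ContinuousLinearMap.fst 𝕜 𝕜 𝕜 else ContinuousLinearMap.snd 𝕜 𝕜 𝕜

theorem norm_prodMonomial_le (n i : ℕ) : ‖prodMonomial 𝕜 n i‖ ≤ 1 := by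
  refine (ContinuousMultilinearMap.norm_compContinuousLinearMap_le _ _).trans ?_
  rw [ContinuousMultilinearMap.norm_mkPiAlgebra, one_mul]
  refine prod_le_one (fun _ _ => norm_nonneg _) fun k _ => ?_
  split
  · exact ContinuousLinearMap.norm_fst_le ..
  · exact ContinuousLinearMap.norm_snd_le ..

theorem prodMonomial_apply_diag {n i : ℕ} (h : i ≤ n) (u v : 𝕜) :
    (prodMonomial 𝕜 n i fun _ => (u, v)) = u ^ i * v ^ (n - i) := by
  have hcoord : ∀ k : Fin n, (if (k : ℕ) < i then ContinuousLinearMap.fst 𝕜 𝕜 𝕜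
      else ContinuousLinearMap.snd 𝕜 𝕜 𝕜) (u, v) = if (k : ℕ) < i then u else v := by
    intro k; split <;> rfl
  rw [prodMonomial, ContinuousMultilinearMap.compContinuousLinearMap_apply,
    ContinuousMultilinearMap.mkPiAlgebra_apply]
  simp only [hcoord]
  rw [Fin.prod_univ_eq_prod_range (fun k => if k < i then u else v), prod_ite, prod_const,
    prod_const]
  have h1 : (range n).filter (· < i) = range i := by ext k; simp only [mem_filter, mem_range]; omega
  have h2 : (range n).filter (¬ · < i) = Ico i n := by
    ext k; simp only [mem_filter, mem_range, mem_Ico]; omega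
  rw [h1, h2, card_range, Nat.card_Ico]

end Monomial

namespace FormalMultilinearSeries

noncomputable def divDiffSeries (p : FormalMultilinearSeries 𝕜 𝕜 E) :
    FormalMultilinearSeries 𝕜 (𝕜 × 𝕜) E :=
  fun n => (∑ i ∈ range (n + 1), prodMonomial 𝕜 n i).smulRight (p.coeff (n + 1))

variable (p : FormalMultilinearSeries 𝕜 𝕜 E)

theorem norm_divDiffSeries_le (n : ℕ) : ‖p.divDiffSeries n‖ ≤ (n + 1) * ‖p (n + 1)‖ := by
  rw [divDiffSeries, ContinuousMultilinearMap.norm_smulRight, ← norm_apply_eq_norm_coef]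
  gcongr
  refine (norm_sum_le _ _).trans ?_
  simpa using sum_le_sum fun i (_ : i ∈ range (n + 1)) => norm_prodMonomial_le 𝕜 n i

theorem sub_smul_divDiffSeries_apply_diag (n : ℕ) (u v : 𝕜) :
    (u - v) • (p.divDiffSeries n fun _ => (u, v)) =
      (p (n + 1) fun _ => u) - p (n + 1) fun _ => v := by
  have hsum : (∑ i ∈ range (n + 1), prodMonomial 𝕜 n i) (fun _ => (u, v)) =
      ∑ i ∈ range (n + 1), u ^ i * v ^ (n + 1 - 1 - i) := by
    rw [_root_.sum_apply]
    refine sum_congr rfl fun i hi => ?_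
    rw [prodMonomial_apply_diag 𝕜 (Nat.lt_succ_iff.mp (mem_range.mp hi)), Nat.add_sub_cancel]
  rw [divDiffSeries, ContinuousMultilinearMap.smulRight_apply, hsum, smul_smul, mul_comm,
    geom_sum₂_mul, apply_eq_pow_smul_coeff, apply_eq_pow_smul_coeff, sub_smul]

theorem radius_le_radius_divDiffSeries : p.radius ≤ p.divDiffSeries.radius := by
  refine ENNReal.le_of_forall_nnreal_lt fun r hr => ?_
  obtain ⟨s, hrs, hs⟩ := ENNReal.lt_iff_exists_nnreal_btwn.mp hr
  obtain ⟨C, -, hC⟩ := p.norm_mul_pow_le_of_lt_radius hs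
  have hs0 : (0 : ℝ) < s := lt_of_le_of_lt r.2 (by exact_mod_cast hrs)
  have hq : ‖(r / s : ℝ)‖ < 1 := by
    rw [Real.norm_of_nonneg (by positivity), div_lt_one hs0]; exact_mod_cast hrs
  refine p.divDiffSeries.le_radius_of_summable
    (((summable_choose_mul_geometric_of_norm_lt_one 1 hq).mul_left (C / s)).of_nonneg_of_le
      (fun n => by positivity) fun n => ?_)
  have hp : ‖p (n + 1)‖ ≤ C / s ^ (n + 1) := by rw [le_div_iff₀ (by positivity)]; exact hC _
  calc ‖p.divDiffSeries n‖ * (r : ℝ) ^ n ≤ (n + 1) * (C / s ^ (n + 1)) * r ^ n := by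
        gcongr; exact (p.norm_divDiffSeries_le n).trans (by gcongr)
    _ = C / s * (((n + 1).choose 1 : ℕ) * (r / s) ^ n) := by
        rw [Nat.choose_one_right, div_pow, pow_succ]; push_cast; field_simp

end FormalMultilinearSeries

variable [CompleteSpace E] {f : 𝕜 → E} {p : FormalMultilinearSeries 𝕜 𝕜 E} {a : 𝕜} {r : ℝ≥0∞}

theorem HasFPowerSeriesOnBall.divDiff (hf : HasFPowerSeriesOnBall f p a r) :
    HasFPowerSeriesOnBall (divDiff f) p.divDiffSeries (a, a) r := by
  set g : 𝕜 × 𝕜 → E := fun z => p.divDiffSeries.sum (z - (a, a))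
  have hr := hf.r_le.trans p.radius_le_radius_divDiffSeries
  have hg : HasFPowerSeriesOnBall g p.divDiffSeries (a, a) r := by
    simpa only [zero_add] using
      ((p.divDiffSeries.hasFPowerSeriesOnBall (hf.r_pos.trans_le hr)).mono hf.r_pos hr).comp_sub
        (a, a)
  have hshift : ∀ x ∈ Metric.eball a r,
      HasSum (fun n => p (n + 1) fun _ => x - a) (f x - p 0 fun _ => x - a) := fun x hx => by
    simpa using (hasSum_nat_add_iff' 1).mpr (hf.hasSum_sub hx)
  have hsub : ∀ x ∈ Metric.eball a r, ∀ y ∈ Metric.eball a r, (x - y) • g (x, y) = f x - f y := by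
    intro x hx y hy
    have hxy : (x, y) ∈ Metric.eball (a, a) r := by
      rw [← Metric.eball_prod_same]; exact ⟨hx, hy⟩
    refine ((hg.hasSum_sub hxy).const_smul (x - y)).unique ?_
    convert (hshift x hx).sub (hshift y hy) using 1
    · ext n
      rw [Prod.mk_sub_mk, ← p.sub_smul_divDiffSeries_apply_diag, sub_sub_sub_cancel_right]
    · simp
  refine hg.congr fun z hz => ?_
  obtain ⟨x, y⟩ := z
  obtain ⟨hx, hy⟩ : x ∈ Metric.eball a r ∧ y ∈ Metric.eball a r := by
    rwa [← Metric.eball_prod_same] at hz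
  rcases eq_or_ne x y with rfl | hne
  · have hg_cont : ContinuousAt (fun t => g (t, x)) x :=
      (hg.continuousOn.continuousAt (Metric.isOpen_eball.mem_nhds hz)).comp
        (f := fun t => (t, x)) (by fun_prop)
    have hdslope_cont : ContinuousAt (dslope f x) x :=
      continuousAt_dslope_same.2 (hf.analyticAt_of_mem hx).differentiableAt
    have heq : (fun t => g (t, x)) =ᶠ[𝓝[≠] x] dslope f x := by
      filter_upwards [nhdsWithin_le_nhds (Metric.isOpen_eball.mem_nhds hx), self_mem_nhdsWithin]
        with t ht htx
      exact eq_divDiff_of_sub_smul_eq htx (hsub t ht x hx)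
    exact ((hg_cont.eventuallyEq_nhds_iff_eventuallyEq_nhdsNE hdslope_cont).mp heq).eq_of_nhds
  · exact eq_divDiff_of_sub_smul_eq hne (hsub x hx y hy)

theorem AnalyticAt.divDiff (hf : AnalyticAt 𝕜 f a) :
    AnalyticAt 𝕜 (divDiff f) (a, a) :=
  let ⟨_, _, hp⟩ := hf
  hp.divDiff.analyticAt

end DividedDifference

/-- Let `φ : ℂ → ℂ` be holomorphic near `y₀` with `φ'(y₀) ≠ 0`.  Then for
`F(x,y) = φ'(y)/(φ(x) − φ(y))` (defined for `x ≠ y` near `y₀`), the difference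
`F(x,y) − 1/(x−y)` extends holomorphically across the diagonal, and its value on the
diagonal is `−(1/2)·φ''(y)/φ'(y)`. -/
theorem statement19 (φ : ℂ → ℂ) (y₀ : ℂ)
    (hφ : AnalyticAt ℂ φ y₀) (hφ' : deriv φ y₀ ≠ 0) :
    ∃ (U : Set (ℂ × ℂ)) (G : ℂ × ℂ → ℂ),
      U ∈ nhds (y₀, y₀) ∧
      (∀ z ∈ U, AnalyticAt ℂ G z) ∧
      (∀ z ∈ U, z.1 ≠ z.2 →
        G z = deriv φ z.2 / (φ z.1 - φ z.2) - 1 / (z.1 - z.2)) ∧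
      (∀ y : ℂ, ((y, y) : ℂ × ℂ) ∈ U →
        G (y, y) = -(deriv (deriv φ) y) / (2 * deriv φ y)) := by
  have hH : AnalyticAt ℂ (divDiff φ) (y₀, y₀) := hφ.divDiff
  refine ⟨{z | AnalyticAt ℂ (divDiff φ) z ∧ divDiff φ z ≠ 0},
    fun z => -fderiv ℂ (divDiff φ) z (0, 1) / divDiff φ z, ?_, ?_, ?_, ?_⟩
  · have hne : divDiff φ (y₀, y₀) ≠ 0 := by rwa [divDiff_diag]
    exact hH.eventually_analyticAt.and (hH.continuousAt.eventually_ne hne)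
  · rintro z ⟨hz, hz0⟩
    have hpartial_analytic : AnalyticAt ℂ (fun z => fderiv ℂ (divDiff φ) z (0, 1)) z :=
      ((ContinuousLinearMap.apply ℂ ℂ ((0 : ℂ), (1 : ℂ))).analyticAt _).comp hz.fderiv
    exact hpartial_analytic.neg.div hz hz0
  · rintro ⟨x, y⟩ ⟨hz, hz0⟩ (hxy : x ≠ y)
    have hslope := sub_smul_divDiff φ (x, y)
    have hpartial := sub_smul_fderiv_divDiff_snd hz.differentiableAt
    simp only [smul_eq_mul] at hslope hpartial
    have hxy' : x - y ≠ 0 := sub_ne_zero.2 hxy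
    rw [← hslope]
    field_simp
    linear_combination -hpartial
  · rintro y ⟨hz, hz0⟩
    have hpartial := two_smul_fderiv_divDiff_snd_diag hz.differentiableAt
    rw [divDiff_diag] at hz0
    simp only [divDiff_diag, ← hpartial, smul_eq_mul]
    field_simp
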